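/- arXiv:1110.1243 — 2 statements merged into one kernel-verified Lean document; each statement's English description precedes it below -/
import Mathlib

section
/- Let X and Y be Banach spaces and T : X → Y a bounded linear operator. Then cc(T) ≤ 2·β(T(B_X)), and consequently cc(T) ≤ 4·χ(T(B_X)), where B_X is the closed unit ball of X. -/
open Metric NormedSpace Filter Topology Set

noncomputable section

/-- A subset of a Banach space is weakly compact if it is compact in the weak topology. -/
def IsWeaklyCompact {Z : Type*} [NormedAddCommGroup Z] [NormedSpace ℝ Z] (K : Set Z) : Prop :=
  IsCompact (toWeakSpace ℝ Z '' K)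

/-- `ca (x_k) = inf_n sup_{i,j ≥ n} ‖x_i - x_j‖`. -/
def ca {Z : Type*} [NormedAddCommGroup Z] (x : ℕ → Z) : ℝ :=
  ⨅ n : ℕ, sSup {r : ℝ | ∃ i j : ℕ, n ≤ i ∧ n ≤ j ∧ r = ‖x i - x j‖}

/-- `wca` is the infimum of `ca` over all subsequences. -/
def wca {Z : Type*} [NormedAddCommGroup Z] (x : ℕ → Z) : ℝ :=
  ⨅ φ : {φ : ℕ → ℕ // StrictMono φ}, ca (x ∘ φ)

/-- A sequence is weakly Cauchy if `(x*(x_k))` converges for every functional `x*`. -/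
def WeaklyCauchy {Z : Type*} [NormedAddCommGroup Z] [NormedSpace ℝ Z] (x : ℕ → Z) : Prop :=
  ∀ f : StrongDual ℝ Z, ∃ l : ℝ, Tendsto (fun n => f (x n)) atTop (nhds l)

/-- A sequence is weakly null if `x*(x_k) → 0` for every functional `x*`. -/
def WeaklyNull {Z : Type*} [NormedAddCommGroup Z] [NormedSpace ℝ Z] (x : ℕ → Z) : Prop :=
  ∀ f : StrongDual ℝ Z, Tendsto (fun n => f (x n)) atTop (nhds 0)

/-- `cc T`: measure of non-complete-continuity of an operator. -/
def cc {X Y : Type*} [NormedAddCommGroup X] [NormedSpace ℝ X]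
    [NormedAddCommGroup Y] [NormedSpace ℝ Y] (T : X →L[ℝ] Y) : ℝ :=
  sSup {r : ℝ | ∃ x : ℕ → X, (∀ n, ‖x n‖ ≤ 1) ∧ WeaklyCauchy x ∧
    r = ca (fun n => T (x n))}

/-- Non-symmetrized Hausdorff distance `d̂(A,B) = sup_{a ∈ A} dist(a, B)`. -/
def dhat {Z : Type*} [NormedAddCommGroup Z] (A B : Set Z) : ℝ :=
  ⨆ a : A, infDist (a : Z) B

/-- de Blasi measure of weak non-compactness. -/
def deBlasiOmega {Z : Type*} [NormedAddCommGroup Z] [NormedSpace ℝ Z] (A : Set Z) : ℝ :=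
  ⨅ K : {K : Set Z // K.Nonempty ∧ IsWeaklyCompact K}, dhat A K

/-- Hausdorff measure of non-compactness. -/
def hausdorffChi {Z : Type*} [NormedAddCommGroup Z] (A : Set Z) : ℝ :=
  ⨅ F : {F : Set Z // F.Finite ∧ F.Nonempty}, dhat A F

/-- weak* closure of a set of functionals. -/
def wstarClosure {E : Type*} [NormedAddCommGroup E] [NormedSpace ℝ E]
    (A : Set (StrongDual ℝ E)) : Set (StrongDual ℝ E) :=
  StrongDual.toWeakDual ⁻¹' closure (StrongDual.toWeakDual '' A)

/-- `wk_Z(A) = d̂(cl_{w*}(ι(A)), ι(Z))` in the bidual. -/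
def wkMeasure {Z : Type*} [NormedAddCommGroup Z] [NormedSpace ℝ Z] (A : Set Z) : ℝ :=
  dhat (wstarClosure ((inclusionInDoubleDual ℝ Z) '' A))
    (Set.range (inclusionInDoubleDual ℝ Z))

/-- `z` is a weak* cluster point of the sequence `u` of functionals. -/
def IsWeakStarClusterPt {E : Type*} [NormedAddCommGroup E] [NormedSpace ℝ E]
    (z : StrongDual ℝ E) (u : ℕ → StrongDual ℝ E) : Prop :=
  MapClusterPt (StrongDual.toWeakDual z) atTop (fun n => StrongDual.toWeakDual (u n))

/-- `wck(A)`. -/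
def wck {Z : Type*} [NormedAddCommGroup Z] [NormedSpace ℝ Z] (A : Set Z) : ℝ :=
  sSup {r : ℝ | ∃ x : ℕ → Z, (∀ n, x n ∈ A) ∧
    r = sInf {s : ℝ | ∃ (z : StrongDual ℝ (StrongDual ℝ Z)) (x₀ : Z),
      IsWeakStarClusterPt z (fun n => inclusionInDoubleDual ℝ Z (x n)) ∧
      s = ‖z - inclusionInDoubleDual ℝ Z x₀‖}}

/-- `ca_ρ` of a sequence. -/
def caRho {Z : Type*} [NormedAddCommGroup Z] [NormedSpace ℝ Z] (x : ℕ → Z) : ℝ :=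
  ⨆ K : {K : Set (StrongDual ℝ Z) // K ⊆ closedBall 0 1 ∧ IsWeaklyCompact K},
    ⨅ n : ℕ, sSup {r : ℝ | ∃ i j : ℕ, n ≤ i ∧ n ≤ j ∧
      ∃ f ∈ K.1, r = |f (x i) - f (x j)|}

/-- `wca_ρ` of a sequence. -/
def wcaRho {Z : Type*} [NormedAddCommGroup Z] [NormedSpace ℝ Z] (x : ℕ → Z) : ℝ :=
  ⨅ φ : {φ : ℕ → ℕ // StrictMono φ}, caRho (x ∘ φ)

/-- `ca_{ρ*}` of a sequence in a dual space. -/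
def caRhoStar {Z : Type*} [NormedAddCommGroup Z] [NormedSpace ℝ Z]
    (x : ℕ → StrongDual ℝ Z) : ℝ :=
  ⨆ K : {K : Set Z // K ⊆ closedBall 0 1 ∧ IsWeaklyCompact K},
    ⨅ n : ℕ, sSup {r : ℝ | ∃ i j : ℕ, n ≤ i ∧ n ≤ j ∧
      ∃ v ∈ K.1, r = |x i v - x j v|}

/-- `wca_{ρ*}` of a sequence in a dual space. -/
def wcaRhoStar {Z : Type*} [NormedAddCommGroup Z] [NormedSpace ℝ Z]
    (x : ℕ → StrongDual ℝ Z) : ℝ :=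
  ⨅ φ : {φ : ℕ → ℕ // StrictMono φ}, caRhoStar (x ∘ φ)

/-- `δ(x_k)`. -/
def deltaSeq {Z : Type*} [NormedAddCommGroup Z] [NormedSpace ℝ Z] (x : ℕ → Z) : ℝ :=
  ⨆ f : (closedBall (0 : StrongDual ℝ Z) 1),
    ⨅ n : ℕ, sSup {r : ℝ | ∃ i j : ℕ, n ≤ i ∧ n ≤ j ∧
      r = |(f : StrongDual ℝ Z) (x i) - (f : StrongDual ℝ Z) (x j)|}

/-- The adjoint of a bounded operator between Banach spaces. -/
def adjointOp {X Y : Type*} [NormedAddCommGroup X] [NormedSpace ℝ X]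
    [NormedAddCommGroup Y] [NormedSpace ℝ Y] (T : X →L[ℝ] Y) :
    StrongDual ℝ Y →L[ℝ] StrongDual ℝ X :=
  (ContinuousLinearMap.compL ℝ X Y ℝ).flip T

/-- `β(A) = sup{ wca(x_k) : (x_k) a sequence in A }`. -/
def betaMeasure {Z : Type*} [NormedAddCommGroup Z] (A : Set Z) : ℝ :=
  sSup {r : ℝ | ∃ x : ℕ → Z, (∀ n, x n ∈ A) ∧ r = wca x}

/-!
If `ca (T x_k) > 2d` for a weakly Cauchy `(x_k)`, then arbitrarily far out there are terms
`T x_i`, `T x_j` and a functional `g` of norm at most one with `g (T x_i - T x_j) > 2d`.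
As `g (T x_k)` converges to some `L`, one of `g (T x_i)`, `g (T x_j)` is more than `d` away
from `L`, hence that term is more than `d` away from all late terms. Iterating gives a
`d`-separated subsequence of `T(B_X)`, every subsequence of which has `ca ≥ d`; so
`ca (T x_k) ≤ 2 β`. For `β ≤ 2 χ`: a sequence covered by finitely many balls of radius `r`
has a subsequence inside one of them, and that subsequence has `ca ≤ 2r`.
-/

open Bornology

instance : Nonempty {φ : ℕ → ℕ // StrictMono φ} := ⟨⟨id, strictMono_id⟩⟩

theorem Filter.extraction_forall_lt_of_frequently_eventually {R : ℕ → ℕ → Prop}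
    (h : ∃ᶠ q in atTop, ∀ᶠ m in atTop, R q m) :
    ∃ φ : ℕ → ℕ, StrictMono φ ∧ ∀ k l, k < l → R (φ k) (φ l) := by
  obtain ⟨φ, -, hφ⟩ := exists_seq_of_forall_finset_exists (fun q => ∀ᶠ m in atTop, R q m)
    (fun q m => q < m ∧ R q m) fun s hs => by
      obtain ⟨N, hN⟩ := eventually_atTop.1
        (s.eventually_all.2 fun q hq => (eventually_gt_atTop q).and (hs q hq))
      obtain ⟨q, hqN, hq⟩ := frequently_atTop.1 h N
      exact ⟨q, hq, hN q hqN⟩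
  exact ⟨φ, fun k l hkl => (hφ k l hkl).1, fun k l hkl => (hφ k l hkl).2⟩

section Ca

variable {Z : Type*} [NormedAddCommGroup Z]

def tailDiam (x : ℕ → Z) (n : ℕ) : ℝ :=
  sSup {r : ℝ | ∃ i j : ℕ, n ≤ i ∧ n ≤ j ∧ r = ‖x i - x j‖}

theorem ca_eq_iInf_tailDiam (x : ℕ → Z) : ca x = ⨅ n, tailDiam x n := rfl

theorem tailDiam_nonneg (x : ℕ → Z) (n : ℕ) : 0 ≤ tailDiam x n :=
  Real.sSup_nonneg (by rintro _ ⟨i, j, -, -, rfl⟩; positivity)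

theorem ca_nonneg (x : ℕ → Z) : 0 ≤ ca x :=
  Real.iInf_nonneg (tailDiam_nonneg x)

theorem ca_le_tailDiam (x : ℕ → Z) (n : ℕ) : ca x ≤ tailDiam x n :=
  ciInf_le ⟨0, by rintro _ ⟨m, rfl⟩; exact tailDiam_nonneg x m⟩ n

theorem norm_sub_le_tailDiam {x : ℕ → Z} (hx : IsBounded (range x)) {n i j : ℕ}
    (hi : n ≤ i) (hj : n ≤ j) : ‖x i - x j‖ ≤ tailDiam x n := by
  obtain ⟨C, hC⟩ := Metric.isBounded_iff.1 hx
  refine le_csSup ⟨C, ?_⟩ ⟨i, j, hi, hj, rfl⟩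
  rintro _ ⟨i', j', -, -, rfl⟩
  rw [← dist_eq_norm]
  exact hC (mem_range_self i') (mem_range_self j')

theorem tailDiam_le {x : ℕ → Z} {n : ℕ} {C : ℝ}
    (h : ∀ i j, n ≤ i → n ≤ j → ‖x i - x j‖ ≤ C) : tailDiam x n ≤ C :=
  csSup_le ⟨_, n, n, le_rfl, le_rfl, rfl⟩ (by rintro _ ⟨i, j, hi, hj, rfl⟩; exact h i j hi hj)

theorem ca_le_of_forall_norm_sub_le {x : ℕ → Z} {C : ℝ} (h : ∀ i j, ‖x i - x j‖ ≤ C) :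
    ca x ≤ C :=
  (ca_le_tailDiam x 0).trans (tailDiam_le fun i j _ _ => h i j)

theorem exists_lt_norm_sub_of_lt_ca {x : ℕ → Z} {r : ℝ} (hr : r < ca x) (n : ℕ) :
    ∃ i j, n ≤ i ∧ n ≤ j ∧ r < ‖x i - x j‖ := by
  by_contra! h
  exact (hr.trans_le (ca_le_tailDiam x n)).not_ge (tailDiam_le h)

theorem wca_nonneg (x : ℕ → Z) : 0 ≤ wca x :=
  Real.iInf_nonneg fun _ => ca_nonneg _

theorem wca_le_ca_comp (x : ℕ → Z) {φ : ℕ → ℕ} (hφ : StrictMono φ) : wca x ≤ ca (x ∘ φ) :=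
  ciInf_le (f := fun ψ : {ψ : ℕ → ℕ // StrictMono ψ} => ca (x ∘ ψ.1))
    ⟨0, by rintro _ ⟨ψ, rfl⟩; exact ca_nonneg _⟩ ⟨φ, hφ⟩

theorem le_wca_of_forall_lt_le_norm_sub {x : ℕ → Z} {d : ℝ} (hx : IsBounded (range x))
    (h : ∀ k l, k < l → d ≤ ‖x k - x l‖) : d ≤ wca x := by
  refine le_ciInf fun ⟨φ, hφ⟩ => ?_
  rw [ca_eq_iInf_tailDiam]
  refine le_ciInf fun n => ?_
  have hxφ : IsBounded (range (x ∘ φ)) := hx.subset (range_comp_subset_range φ x)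
  exact (h _ _ (hφ n.lt_succ_self)).trans (norm_sub_le_tailDiam hxφ le_rfl n.le_succ)

theorem betaMeasure_nonneg (A : Set Z) : 0 ≤ betaMeasure A :=
  Real.sSup_nonneg (by rintro _ ⟨x, -, rfl⟩; exact wca_nonneg x)

theorem wca_le_betaMeasure {A : Set Z} (hA : IsBounded A) {x : ℕ → Z} (hx : ∀ n, x n ∈ A) :
    wca x ≤ betaMeasure A := by
  obtain ⟨C, hC⟩ := Metric.isBounded_iff.1 hA
  refine le_csSup ⟨C, ?_⟩ ⟨x, hx, rfl⟩
  rintro _ ⟨z, hz, rfl⟩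
  refine (wca_le_ca_comp z strictMono_id).trans (ca_le_of_forall_norm_sub_le fun i j => ?_)
  rw [← dist_eq_norm]
  exact hC (hz i) (hz j)

end Ca

section WeaklyCauchy

variable {X Y : Type*} [NormedAddCommGroup X] [NormedSpace ℝ X]
  [NormedAddCommGroup Y] [NormedSpace ℝ Y]

theorem WeaklyCauchy.map {x : ℕ → X} (hx : WeaklyCauchy x) (T : X →L[ℝ] Y) :
    WeaklyCauchy fun n => T (x n) :=
  fun f => hx (f.comp T)

theorem WeaklyCauchy.frequently_eventually_le_norm_sub {y : ℕ → Y} (hy : WeaklyCauchy y)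
    {d : ℝ} (hd : 2 * d < ca y) : ∃ᶠ q in atTop, ∀ᶠ m in atTop, d ≤ ‖y q - y m‖ := by
  refine frequently_atTop.2 fun n => ?_
  obtain ⟨i, j, hi, hj, hij⟩ := exists_lt_norm_sub_of_lt_ca hd n
  obtain ⟨g, hg, hgij⟩ := exists_dual_vector'' ℝ (y i - y j)
  obtain ⟨L, hL⟩ := hy g
  have hg_le : ∀ a b, |g a - g b| ≤ ‖a - b‖ := fun a b => by
    simpa [Real.norm_eq_abs] using g.le_of_opNorm_le hg (a - b)
  have hfar : ∃ q, n ≤ q ∧ d < |g (y q) - L| := by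
    by_contra! hnear
    rw [map_sub, RCLike.ofReal_real_eq_id, id] at hgij
    linarith [le_abs_self (g (y i) - L), neg_abs_le (g (y j) - L), hnear i hi, hnear j hj]
  obtain ⟨q, hq, hdq⟩ := hfar
  refine ⟨q, hq, (hL.eventually (Metric.ball_mem_nhds L (sub_pos.2 hdq))).mono fun m hm => ?_⟩
  rw [Real.dist_eq] at hm
  linarith [hg_le (y q) (y m), abs_sub_le (g (y q)) (g (y m)) L]

theorem WeaklyCauchy.ca_le_two_mul_betaMeasure {y : ℕ → Y} (hy : WeaklyCauchy y) {A : Set Y}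
    (hA : IsBounded A) (hyA : ∀ n, y n ∈ A) : ca y ≤ 2 * betaMeasure A := by
  suffices ca y / 2 ≤ betaMeasure A by linarith
  refine le_of_forall_lt_imp_le_of_dense fun d hd => ?_
  obtain ⟨φ, hφ, hsep⟩ :=
    extraction_forall_lt_of_frequently_eventually (hy.frequently_eventually_le_norm_sub (d := d) (by linarith))
  calc d ≤ wca (y ∘ φ) :=
        le_wca_of_forall_lt_le_norm_sub (hA.subset (range_subset_iff.2 fun k => hyA (φ k))) hsep
    _ ≤ betaMeasure A := wca_le_betaMeasure hA fun k => hyA (φ k)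

theorem cc_le_two_mul_betaMeasure (T : X →L[ℝ] Y) :
    cc T ≤ 2 * betaMeasure (T '' closedBall 0 1) := by
  refine Real.sSup_le ?_ (mul_nonneg zero_le_two (betaMeasure_nonneg _))
  rintro _ ⟨x, hx, hwc, rfl⟩
  exact (hwc.map T).ca_le_two_mul_betaMeasure (T.lipschitz.isBounded_image isBounded_closedBall)
    fun n => mem_image_of_mem T (mem_closedBall_zero_iff.2 (hx n))

end WeaklyCauchy

section HausdorffChi

variable {Z : Type*} [NormedAddCommGroup Z]

instance : Nonempty {F : Set Z // F.Finite ∧ F.Nonempty} :=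
  ⟨⟨{0}, finite_singleton 0, singleton_nonempty 0⟩⟩

theorem hausdorffChi_nonneg (A : Set Z) : 0 ≤ hausdorffChi A :=
  Real.iInf_nonneg fun _ => Real.iSup_nonneg fun _ => infDist_nonneg

theorem infDist_le_dhat {A F : Set Z} (hA : IsBounded A) (hF : F.Nonempty) {a : Z} (ha : a ∈ A) :
    infDist a F ≤ dhat A F := by
  obtain ⟨f, hf⟩ := hF
  obtain ⟨C, hC⟩ := hA.subset_closedBall f
  refine le_ciSup (f := fun b : A => infDist (b : Z) F) ⟨C, ?_⟩ ⟨a, ha⟩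
  rintro _ ⟨b, rfl⟩
  exact (infDist_le_dist_of_mem hf).trans (hC b.2)

theorem exists_extraction_forall_dist_lt_of_dhat_lt {A F : Set Z} (hA : IsBounded A)
    (hF : F.Finite) (hF₀ : F.Nonempty) {r : ℝ} (hr : dhat A F < r) {x : ℕ → Z}
    (hx : ∀ n, x n ∈ A) : ∃ f ∈ F, ∃ φ : ℕ → ℕ, StrictMono φ ∧ ∀ k, dist (x (φ k)) f < r := by
  have hnear : ∀ n, ∃ f ∈ F, dist (x n) f < r := fun n =>
    (infDist_lt_iff hF₀).1 ((infDist_le_dhat hA hF₀ (hx n)).trans_lt hr)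
  obtain ⟨f, hf, hfreq⟩ := hF.frequently_exists.1 (Frequently.of_forall (f := atTop) hnear)
  obtain ⟨φ, hφ, hdist⟩ := extraction_of_frequently_atTop hfreq
  exact ⟨f, hf, φ, hφ, hdist⟩

theorem wca_le_two_mul_hausdorffChi {A : Set Z} (hA : IsBounded A) {x : ℕ → Z}
    (hx : ∀ n, x n ∈ A) : wca x ≤ 2 * hausdorffChi A := by
  suffices wca x / 2 ≤ hausdorffChi A by linarith
  refine le_of_forall_gt_imp_ge_of_dense fun r hr => ?_
  obtain ⟨⟨F, hF, hF₀⟩, hFr⟩ := exists_lt_of_ciInf_lt hr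
  obtain ⟨f, -, φ, hφ, hdist⟩ := exists_extraction_forall_dist_lt_of_dhat_lt hA hF hF₀ hFr hx
  have : ca (x ∘ φ) ≤ 2 * r := ca_le_of_forall_norm_sub_le fun k l => by
    rw [← dist_eq_norm, Function.comp_apply, Function.comp_apply]
    linarith [dist_triangle_right (x (φ k)) (x (φ l)) f, hdist k, hdist l]
  linarith [wca_le_ca_comp x hφ]

theorem betaMeasure_le_two_mul_hausdorffChi {A : Set Z} (hA : IsBounded A) :
    betaMeasure A ≤ 2 * hausdorffChi A :=
  Real.sSup_le (by rintro _ ⟨x, hx, rfl⟩; exact wca_le_two_mul_hausdorffChi hA hx)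
    (mul_nonneg zero_le_two (hausdorffChi_nonneg A))

end HausdorffChi

theorem statement1_general {X Y : Type*} [NormedAddCommGroup X] [NormedSpace ℝ X]
    [NormedAddCommGroup Y] [NormedSpace ℝ Y] (T : X →L[ℝ] Y) :
    cc T ≤ 2 * betaMeasure (T '' closedBall 0 1) ∧
    cc T ≤ 4 * hausdorffChi (T '' closedBall 0 1) := by
  have hβ := betaMeasure_le_two_mul_hausdorffChi
    (T.lipschitz.isBounded_image (isBounded_closedBall (x := (0 : X)) (r := 1)))
  have hcc := cc_le_two_mul_betaMeasure T
  exact ⟨hcc, by linarith⟩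

/-- For a bounded operator `T : X → Y` between Banach spaces,
`cc(T) ≤ 2 β(T(B_X))` and consequently `cc(T) ≤ 4 χ(T(B_X))`. -/
theorem statement1 {X Y : Type*} [NormedAddCommGroup X] [NormedSpace ℝ X] [CompleteSpace X]
    [NormedAddCommGroup Y] [NormedSpace ℝ Y] [CompleteSpace Y] (T : X →L[ℝ] Y) :
    cc T ≤ 2 * betaMeasure (T '' closedBall 0 1) ∧
    cc T ≤ 4 * hausdorffChi (T '' closedBall 0 1) :=
  statement1_general T

end
end

section
/- Let X be a Banach space with the Dunford–Pettis property, i.e., x*_n(x_n) → 0 whenever (x_n) is a weakly null sequence in X and (x*_n) is a weakly null sequence in X*. Then for every bounded sequence (x_n) in X: wca_ρ(x_n) ≤ 2·ω({x_n : n ∈ ℕ}). -/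
open Metric NormedSpace Filter Topology Set

noncomputable section

/-!
Given `ε > 0`, choose a weakly compact `K` with every `x n` within `ω + ε` of some `k n ∈ K`.
A subsequence of `(k n)` converges weakly to some `u` (sequential weak compactness, obtained from a
countable family of functionals separating the points of the closed span of the `k n`).
By the Dunford–Pettis property a weakly null sequence tends to `0` uniformly on each weakly
compact set of functionals: otherwise a weakly convergent sequence of bad functionals would
contradict it. Applied to `k (φ n) - u`, this gives `|f (x i) - f (x j)| ≤ 2 (ω + ε) + o(1)`
uniformly on such sets.
-/

section WeakCompactness

variable {E : Type*} [NormedAddCommGroup E] [NormedSpace ℝ E]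

theorem TopologicalSpace.IsSeparable.exists_dual_seq_separating {s : Set E}
    (hs : TopologicalSpace.IsSeparable s) :
    ∃ g : ℕ → StrongDual ℝ E, ∀ z ∈ s, (∀ m, g m z = 0) → z = 0 := by
  obtain ⟨D, hD, hsD⟩ := hs
  obtain ⟨e, he⟩ := (hD.insert 0).exists_eq_range (insert_nonempty 0 D)
  choose g hg_norm hg_eval using fun m => exists_dual_vector'' ℝ (e m)
  refine ⟨g, fun z hz hgz => norm_le_zero_iff.mp (le_of_forall_pos_le_add fun ε hε => ?_)⟩
  have hz' : z ∈ closure (range e) := closure_mono (he ▸ subset_insert 0 D) (hsD hz)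
  obtain ⟨_, ⟨m, rfl⟩, hm⟩ := Metric.mem_closure_iff.mp hz' (ε / 2) (half_pos hε)
  -- `g m` kills `z` and norms `e m`
  have hem : ‖e m‖ ≤ ‖e m - z‖ := calc
    ‖e m‖ = g m (e m - z) := by simp [hgz m, hg_eval m]
    _ ≤ ‖g m (e m - z)‖ := le_abs_self _
    _ ≤ 1 * ‖e m - z‖ := (g m).le_of_opNorm_le (hg_norm m) _
    _ = ‖e m - z‖ := one_mul _
  rw [dist_eq_norm] at hm
  calc ‖z‖ ≤ ‖e m‖ + ‖z - e m‖ := norm_le_norm_add_norm_sub' z (e m)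
    _ ≤ 0 + ε := by rw [norm_sub_rev] at hem; linarith

theorem isWeaklyCompact_singleton (a : E) : IsWeaklyCompact {a} := by
  simp only [IsWeaklyCompact, image_singleton, isCompact_singleton]

theorem Convex.isClosed_toWeakSpace_image {s : Set E} (hs : Convex ℝ s) (hs' : IsClosed s) :
    IsClosed (toWeakSpace ℝ E '' s) := by
  rw [← hs'.closure_eq, hs.toWeakSpace_closure ℝ]
  exact isClosed_closure

theorem WeaklyNull.comp_tendsto {x : ℕ → E} (hx : WeaklyNull x) {φ : ℕ → ℕ}
    (hφ : Tendsto φ atTop atTop) : WeaklyNull (x ∘ φ) :=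
  fun f => (hx f).comp hφ

theorem IsWeaklyCompact.exists_subseq_weaklyNull {K : Set E} (hK : IsWeaklyCompact K)
    {k : ℕ → E} (hk : ∀ n, k n ∈ K) :
    ∃ φ : ℕ → ℕ, StrictMono φ ∧ ∃ u ∈ K, WeaklyNull fun n => k (φ n) - u := by
  set Y := (Submodule.span ℝ (range k)).topologicalClosure
  have hY : IsClosed (toWeakSpace ℝ E '' Y) :=
    Y.convex.isClosed_toWeakSpace_image (Submodule.isClosed_topologicalClosure _)
  have hY_sep : TopologicalSpace.IsSeparable (Y : Set E) := by
    rw [Submodule.topologicalClosure_coe]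
    exact ((countable_range k).isSeparable.span (R := ℝ)).closure
  obtain ⟨g, hg⟩ := hY_sep.exists_dual_seq_separating
  -- `T` maps into the metrizable `ℕ → ℝ`, where compactness yields convergent subsequences
  let T : WeakSpace ℝ E → ℕ → ℝ := fun w m => g m ((toWeakSpace ℝ E).symm w)
  have hT : Continuous T := continuous_pi fun m => WeakBilin.eval_continuous _ (g m)
  obtain ⟨p, -, φ, hφ, hp⟩ := (hK.image hT).tendsto_subseq
    (x := fun n => T (toWeakSpace ℝ E (k n)))
    fun n => mem_image_of_mem _ (mem_image_of_mem _ (hk n))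
  set y := fun n => toWeakSpace ℝ E (k (φ n))
  have hyK : ∀ᶠ n in atTop, y n ∈ toWeakSpace ℝ E '' K :=
    Eventually.of_forall fun n => mem_image_of_mem _ (hk (φ n))
  have hcluster : ∀ v, MapClusterPt (toWeakSpace ℝ E v) atTop y →
      v ∈ Y ∧ ∀ m, g m v = p m := by
    intro v hv
    refine ⟨?_, fun m => congrFun (?_ : T (toWeakSpace ℝ E v) = p) m⟩
    · obtain ⟨v', hv'Y, hv'⟩ := hY.mem_of_mapClusterPt hv
        (Eventually.of_forall fun n => mem_image_of_mem _ (Submodule.le_topologicalClosure _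
          (Submodule.subset_span (mem_range_self (φ n)))))
      exact (toWeakSpace ℝ E).injective hv' ▸ hv'Y
    · exact eq_of_nhds_neBot ((hv.continuousAt_comp hT.continuousAt).clusterPt.mono hp)
  obtain ⟨_, ⟨u, huK, rfl⟩, hu⟩ := hK.exists_mapClusterPt (le_principal_iff.mpr hyK)
  have hy : Tendsto y atTop (𝓝 (toWeakSpace ℝ E u)) := by
    refine hK.tendsto_nhds_of_unique_mapClusterPt hyK fun _ ⟨v, _, hvu⟩ hv => ?_
    subst hvu
    obtain ⟨hvY, hvp⟩ := hcluster v hv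
    obtain ⟨huY, hup⟩ := hcluster u hu
    rw [sub_eq_zero.mp (hg _ (Y.sub_mem hvY huY) fun m => by rw [map_sub, hvp, hup, sub_self])]
  refine ⟨φ, hφ, u, huK, fun f => ?_⟩
  have hf : Continuous fun w => f ((toWeakSpace ℝ E).symm w) := WeakBilin.eval_continuous _ f
  simpa [y] using ((hf.tendsto _).comp hy).sub_const (f u)

end WeakCompactness

theorem infDist_le_dhat_s6 {E : Type*} [NormedAddCommGroup E] {A B : Set E}
    (hA : Bornology.IsBounded A) (hB : B.Nonempty) {a : E} (ha : a ∈ A) :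
    infDist a B ≤ dhat A B := by
  obtain ⟨b, hb⟩ := hB
  obtain ⟨R, hR⟩ := hA.subset_closedBall 0
  refine le_ciSup (f := fun a : A => infDist (a : E) B) ⟨R + dist 0 b, ?_⟩ ⟨a, ha⟩
  rintro _ ⟨⟨c, hc⟩, rfl⟩
  calc infDist c B ≤ dist c b := infDist_le_dist_of_mem hb
    _ ≤ dist c 0 + dist 0 b := dist_triangle _ _ _
    _ ≤ R + dist 0 b := by gcongr; exact mem_closedBall.mp (hR hc)

section MeasuresOfNoncompactness

variable {E : Type*} [NormedAddCommGroup E] [NormedSpace ℝ E]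

theorem exists_dhat_lt_of_deBlasiOmega_lt {A : Set E} {r : ℝ} (h : deBlasiOmega A < r) :
    ∃ K : Set E, K.Nonempty ∧ IsWeaklyCompact K ∧ dhat A K < r := by
  have : Nonempty {K : Set E // K.Nonempty ∧ IsWeaklyCompact K} :=
    ⟨⟨{0}, singleton_nonempty 0, isWeaklyCompact_singleton 0⟩⟩
  obtain ⟨⟨K, hK_ne, hK⟩, hAK⟩ := exists_lt_of_ciInf_lt h
  exact ⟨K, hK_ne, hK, hAK⟩

theorem caRho_nonneg (x : ℕ → E) : 0 ≤ caRho x :=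
  Real.iSup_nonneg fun _ => Real.iInf_nonneg fun _ => Real.sSup_nonneg <| by
    rintro _ ⟨i, j, -, -, f, -, rfl⟩
    exact abs_nonneg _

theorem wcaRho_le_caRho_comp (x : ℕ → E) {φ : ℕ → ℕ} (hφ : StrictMono φ) :
    wcaRho x ≤ caRho (x ∘ φ) :=
  ciInf_le ⟨0, by rintro _ ⟨ψ, rfl⟩; exact caRho_nonneg _⟩
    (⟨φ, hφ⟩ : {φ : ℕ → ℕ // StrictMono φ})

end MeasuresOfNoncompactness

def DunfordPettisProperty (X : Type*) [NormedAddCommGroup X] [NormedSpace ℝ X] : Prop :=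
  ∀ (x : ℕ → X) (f : ℕ → StrongDual ℝ X), WeaklyNull x → WeaklyNull f →
    Tendsto (fun n => f n (x n)) atTop (𝓝 0)

namespace DunfordPettisProperty

variable {X : Type*} [NormedAddCommGroup X] [NormedSpace ℝ X]

theorem eventually_forall_abs_apply_le (hDP : DunfordPettisProperty X) {z : ℕ → X}
    (hz : WeaklyNull z) {K : Set (StrongDual ℝ X)} (hK : IsWeaklyCompact K) {δ : ℝ}
    (hδ : 0 < δ) :
    ∀ᶠ n in atTop, ∀ f ∈ K, |f (z n)| ≤ δ := by
  by_contra h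
  obtain ⟨ψ₀, hψ₀, hbad⟩ := extraction_of_frequently_atTop (not_eventually.mp h)
  push Not at hbad
  choose F hFK hFδ using hbad
  obtain ⟨ψ, hψ, f₀, -, hF⟩ := hK.exists_subseq_weaklyNull hFK
  have hz' : WeaklyNull (z ∘ ψ₀ ∘ ψ) := hz.comp_tendsto (hψ₀.comp hψ).tendsto_atTop
  have hlim : Tendsto (fun n => |F (ψ n) (z (ψ₀ (ψ n)))|) atTop (𝓝 0) := by
    simpa using ((hDP _ _ hz' hF).add (hz' f₀)).abs
  obtain ⟨n, hn⟩ := (hlim.eventually (gt_mem_nhds hδ)).exists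
  exact (hFδ (ψ n)).not_gt hn

theorem caRho_le (hDP : DunfordPettisProperty X) {x k : ℕ → X} {u : X} {r : ℝ}
    (hxk : ∀ n, ‖x n - k n‖ ≤ r) (hk : WeaklyNull fun n => k n - u) :
    caRho x ≤ 2 * r := by
  have hr : 0 ≤ r := (norm_nonneg _).trans (hxk 0)
  refine Real.iSup_le (fun K => le_of_forall_pos_le_add fun δ hδ => ?_) (by positivity)
  obtain ⟨N, hN⟩ :=
    eventually_atTop.mp (hDP.eventually_forall_abs_apply_le hk K.2.2 (half_pos hδ))
  refine (ciInf_le ⟨0, ?_⟩ N).trans (Real.sSup_le ?_ (by positivity))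
  · rintro _ ⟨n, rfl⟩
    exact Real.sSup_nonneg (by rintro _ ⟨i, j, -, -, f, -, rfl⟩; exact abs_nonneg _)
  · rintro _ ⟨i, j, hi, hj, f, hf, rfl⟩
    have hf1 : ‖f‖ ≤ 1 := by simpa using K.2.1 hf
    have hxk' : ∀ n, |f (x n - k n)| ≤ r := fun n =>
      (f.le_of_opNorm_le hf1 _).trans (by simpa using hxk n)
    have h₁ := hxk' i
    have h₂ := hxk' j
    have h₃ := hN i hi f hf
    have h₄ := hN j hj f hf
    simp only [map_sub, abs_le] at h₁ h₂ h₃ h₄ ⊢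
    constructor <;> linarith

end DunfordPettisProperty

theorem statement6_general {X : Type*} [NormedAddCommGroup X] [NormedSpace ℝ X]
    (hDP : ∀ (x : ℕ → X) (f : ℕ → StrongDual ℝ X), WeaklyNull x → WeaklyNull f →
      Tendsto (fun n => f n (x n)) atTop (nhds 0))
    (x : ℕ → X) (hx : ∃ M : ℝ, ∀ n, ‖x n‖ ≤ M) :
    wcaRho x ≤ 2 * deBlasiOmega (Set.range x) := by
  have hbdd : Bornology.IsBounded (range x) := by
    obtain ⟨M, hM⟩ := hx
    exact isBounded_iff_forall_norm_le.mpr ⟨M, forall_mem_range.mpr hM⟩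
  refine le_of_forall_pos_le_add fun ε hε => ?_
  set ω := deBlasiOmega (range x)
  obtain ⟨K, ⟨k₀, hk₀⟩, hK, hxK⟩ :=
    exists_dhat_lt_of_deBlasiOmega_lt (lt_add_of_pos_right ω (half_pos hε))
  have hdist : ∀ n, infDist (x n) K < ω + ε / 2 := fun n =>
    (infDist_le_dhat_s6 hbdd ⟨k₀, hk₀⟩ (mem_range_self n)).trans_lt hxK
  choose k hkK hxk using fun n => (infDist_lt_iff ⟨k₀, hk₀⟩).mp (hdist n)
  obtain ⟨φ, hφ, u, -, hku⟩ := hK.exists_subseq_weaklyNull hkK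
  calc wcaRho x ≤ caRho (x ∘ φ) := wcaRho_le_caRho_comp x hφ
    _ ≤ 2 * (ω + ε / 2) :=
      DunfordPettisProperty.caRho_le hDP (k := k ∘ φ)
        (fun n => by simpa [← dist_eq_norm] using (hxk (φ n)).le) hku
    _ = 2 * ω + ε := by ring

/-- If `X` has the Dunford–Pettis property, then for every bounded sequence
`(x_n)` in `X`, `wca_ρ(x_n) ≤ 2 ω({x_n : n ∈ ℕ})`. -/
theorem statement6 {X : Type*} [NormedAddCommGroup X] [NormedSpace ℝ X] [CompleteSpace X]
    (hDP : ∀ (x : ℕ → X) (f : ℕ → StrongDual ℝ X), WeaklyNull x → WeaklyNull f →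
      Tendsto (fun n => f n (x n)) atTop (nhds 0))
    (x : ℕ → X) (hx : ∃ M : ℝ, ∀ n, ‖x n‖ ≤ M) :
    wcaRho x ≤ 2 * deBlasiOmega (Set.range x) :=
  statement6_general hDP x hx

end
end
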